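/- arXiv:1507.00638 — 5 statements merged into one kernel-verified Lean document; each statement's English description precedes it below -/
import Mathlib

section
/- The core of the inner mapping group Inn(L) in the multiplication group Mult(L) of a loop L is trivial; that is, the only normal subgroup of Mult(L) contained in Inn(L) is the identity subgroup. -/
open Pointwise

/-- A loop: a binary system with identity in which left and right
translations are uniquely invertible. -/
class LoopStr (L : Type*) extends Mul L, One L where
  one_mul : ∀ a : L, 1 * a = a
  mul_one : ∀ a : L, a * 1 = a
  existsUnique_ldiv : ∀ a b : L, ∃! y, a * y = b
  existsUnique_rdiv : ∀ a b : L, ∃! x, x * a = b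

variable {L : Type*} [LoopStr L]

/-- The left translation `λ_a : y ↦ a * y` as a permutation of `L`. -/
noncomputable def leftT (a : L) : Equiv.Perm L :=
  Equiv.ofBijective (fun y => a * y)
    ⟨fun y₁ y₂ h => by
      obtain ⟨y, -, hu⟩ := LoopStr.existsUnique_ldiv a (a * y₂)
      exact (hu y₁ h).trans (hu y₂ rfl).symm,
     fun b => (LoopStr.existsUnique_ldiv a b).exists⟩

/-- The right translation `ρ_a : y ↦ y * a` as a permutation of `L`. -/
noncomputable def rightT (a : L) : Equiv.Perm L :=
  Equiv.ofBijective (fun y => y * a)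
    ⟨fun y₁ y₂ h => by
      obtain ⟨y, -, hu⟩ := LoopStr.existsUnique_rdiv a (y₂ * a)
      exact (hu y₁ h).trans (hu y₂ rfl).symm,
     fun b => (LoopStr.existsUnique_rdiv a b).exists⟩

/-- The multiplication group `Mult(L)`: the subgroup of `Perm L` generated by
all left and right translations. -/
noncomputable def MultL (L : Type*) [LoopStr L] : Subgroup (Equiv.Perm L) :=
  Subgroup.closure {f | ∃ a : L, f = leftT a ∨ f = rightT a}

/-- The inner mapping group `Inn(L)`: the stabilizer of the identity in `Mult(L)`. -/
noncomputable def InnL (L : Type*) [LoopStr L] : Subgroup (Equiv.Perm L) :=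
  MultL L ⊓ MulAction.stabilizer (Equiv.Perm L) (1 : L)

/-- Left division: the unique `y` with `a * y = b`. -/
noncomputable def ldivL (a b : L) : L := (LoopStr.existsUnique_ldiv a b).choose

/-- Right division: the unique `x` with `x * a = b`. -/
noncomputable def rdivL (b a : L) : L := (LoopStr.existsUnique_rdiv a b).choose

/-! A subgroup normalized by `Mult(L)` and fixing `1` also fixes `g 1` for every `g ∈ Mult(L)`.
Since `ρ_a 1 = a`, `Mult(L)` is transitive, so the subgroup fixes every point and is trivial. -/

theorem Subgroup.eq_bot_of_le_stabilizer_of_conj_mem {α : Type*} (G N : Subgroup (Equiv.Perm α))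
    (x : α) (htrans : ∀ y, ∃ g ∈ G, g x = y) (hS : N ≤ MulAction.stabilizer (Equiv.Perm α) x)
    (hnormal : ∀ g ∈ G, ∀ n ∈ N, g * n * g⁻¹ ∈ N) :
    N = ⊥ := by
  refine (Subgroup.eq_bot_iff_forall N).2 fun n hn => Equiv.ext fun y => ?_
  obtain ⟨g, hg, rfl⟩ := htrans y
  have hfix : (g⁻¹ * n * g) x = x := by
    simpa using hS (hnormal g⁻¹ (G.inv_mem hg) n hn)
  simpa [Equiv.Perm.inv_def, Equiv.symm_apply_eq] using hfix

theorem rightT_mem_multL (a : L) : rightT a ∈ MultL L :=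
  Subgroup.subset_closure ⟨a, Or.inr rfl⟩

theorem exists_mem_multL_apply_one_eq (a : L) : ∃ g ∈ MultL L, g 1 = a :=
  ⟨rightT a, rightT_mem_multL a, LoopStr.one_mul a⟩

theorem core_of_inn_trivial_general (N : Subgroup (Equiv.Perm L))
    (hS : N ≤ InnL L)
    (hnormal : ∀ g ∈ MultL L, ∀ n ∈ N, g * n * g⁻¹ ∈ N) :
    N = ⊥ :=
  Subgroup.eq_bot_of_le_stabilizer_of_conj_mem (MultL L) N 1 exists_mem_multL_apply_one_eq
    (hS.trans inf_le_right) hnormal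

theorem core_of_inn_trivial (N : Subgroup (Equiv.Perm L))
    (hK : N ≤ MultL L) (hS : N ≤ InnL L)
    (hnormal : ∀ g ∈ MultL L, ∀ n ∈ N, g * n * g⁻¹ ∈ N) :
    N = ⊥ :=
  core_of_inn_trivial_general N hS hnormal
end

section
/- If a group K is isomorphic to the multiplication group of a loop L, then there exists a subgroup S ≤ K with trivial core in K and S-connected left transversals A and B to S in K such that K = ⟨A ∪ B⟩. -/
/-!
`Mult(L)` acts faithfully and transitively on `L`, so the stabilizer `S` of the identity
(the inner mapping group) has trivial core. Since `λ_a 1 = ρ_a 1 = a`, the left translations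
and the right translations each form a left transversal to `S`, and they are `S`-connected
because `λ_u⁻¹ ρ_v⁻¹ λ_u ρ_v` sends `1 ↦ v ↦ uv ↦ u ↦ 1`. They generate `Mult(L)` by
definition, and everything transports along `K ≃* Mult(L)`.
-/

open Pointwise

variable {L : Type*} [LoopStr L]

/-- `T` is a left transversal to the subgroup `S` of `G`: every left coset of `S`
contains exactly one element of `T`. -/
def IsLeftTransversalTo {G : Type*} [Group G] (T : Set G) (S : Subgroup G) : Prop :=
  ∀ g : G, ∃! t, t ∈ T ∧ g⁻¹ * t ∈ S

open MulAction

section Transport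

variable {K G : Type*} [Group K] [Group G]

theorem Subgroup.normalCore_comap_of_surjective {f : K →* G} (hf : Function.Surjective f)
    (H : Subgroup G) : (H.comap f).normalCore = H.normalCore.comap f := by
  ext k
  show (∀ b, _) ↔ ∀ c, _
  simp only [Subgroup.mem_comap, map_mul, map_inv]
  exact (hf.forall (p := fun c => c * f k * c⁻¹ ∈ H)).symm

theorem Subgroup.closure_preimage_mulEquiv (e : K ≃* G) (s : Set G) :
    Subgroup.closure (e ⁻¹' s) = (Subgroup.closure s).comap (e : K →* G) := by
  rw [Subgroup.comap_equiv_eq_map_symm, MonoidHom.map_closure]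
  exact congrArg _ (e.toEquiv.image_symm_eq_preimage s).symm

theorem IsLeftTransversalTo.preimage_mulEquiv {T : Set G} {S : Subgroup G}
    (hT : IsLeftTransversalTo T S) (e : K ≃* G) :
    IsLeftTransversalTo (e ⁻¹' T) (S.comap (e : K →* G)) := by
  intro k
  obtain ⟨t, ⟨ht, hkt⟩, huniq⟩ := hT (e k)
  refine ⟨e.symm t, ⟨by simpa using ht, by simpa using hkt⟩, fun k' ⟨hk', hkk'⟩ => ?_⟩
  rw [← huniq (e k') ⟨hk', by simpa using hkk'⟩, e.symm_apply_apply]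

end Transport

section Stabilizer

variable {G X : Type*} [Group G] [MulAction G X]

theorem inv_mul_mem_stabilizer_iff {g t : G} {x : X} :
    g⁻¹ * t ∈ stabilizer G x ↔ t • x = g • x := by
  rw [mem_stabilizer_iff, mul_smul, inv_smul_eq_iff]

theorem normalCore_stabilizer_eq_bot [FaithfulSMul G X] [IsPretransitive G X] (x : X) :
    (stabilizer G x).normalCore = ⊥ := by
  refine eq_bot_iff.2 fun g hg => Subgroup.mem_bot.2 (eq_of_smul_eq_smul (α := X) fun y => ?_)
  obtain ⟨b, rfl⟩ := exists_smul_eq G x y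
  have hfix : b⁻¹ * (g * b) ∈ stabilizer G x := by
    simpa only [inv_inv, mul_assoc] using hg b⁻¹
  rw [inv_mul_mem_stabilizer_iff, mul_smul] at hfix
  rw [hfix, one_smul]

theorem isLeftTransversalTo_range_stabilizer {x : X} {f : X → G} (hf : ∀ y, f y • x = y) :
    IsLeftTransversalTo (Set.range f) (stabilizer G x) := by
  intro g
  refine ⟨f (g • x), ⟨⟨_, rfl⟩, inv_mul_mem_stabilizer_iff.2 (hf _)⟩, ?_⟩
  rintro _ ⟨⟨y, rfl⟩, hy⟩
  rw [← inv_mul_mem_stabilizer_iff.1 hy, hf]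

end Stabilizer

noncomputable def leftMult (a : L) : MultL L :=
  ⟨leftT a, Subgroup.subset_closure ⟨a, Or.inl rfl⟩⟩

noncomputable def rightMult (a : L) : MultL L :=
  ⟨rightT a, Subgroup.subset_closure ⟨a, Or.inr rfl⟩⟩

theorem leftMult_smul (a y : L) : leftMult a • y = a * y := rfl

theorem rightMult_smul (a y : L) : rightMult a • y = y * a := rfl

theorem leftMult_smul_one (a : L) : leftMult a • (1 : L) = a := LoopStr.mul_one a

theorem rightMult_smul_one (a : L) : rightMult a • (1 : L) = a := LoopStr.one_mul a

instance MultL.isPretransitive : IsPretransitive (MultL L) L :=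
  (isPretransitive_iff_base (1 : L)).2 fun y => ⟨leftMult y, leftMult_smul_one y⟩

theorem commutator_leftMult_rightMult_mem_stabilizer (u v : L) :
    (leftMult u)⁻¹ * (rightMult v)⁻¹ * leftMult u * rightMult v ∈
      stabilizer (MultL L) (1 : L) := by
  rw [mem_stabilizer_iff, mul_smul, mul_smul, mul_smul, rightMult_smul_one, leftMult_smul,
    ← rightMult_smul, inv_smul_smul, inv_smul_eq_iff, leftMult_smul_one]

theorem closure_range_leftMult_union_range_rightMult :
    Subgroup.closure (Set.range (leftMult (L := L)) ∪ Set.range rightMult) = ⊤ := by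
  have hgen : Subgroup.closure (((↑) : MultL L → Equiv.Perm L) ⁻¹'
      {f | ∃ a : L, f = leftT a ∨ f = rightT a}) = ⊤ :=
    Subgroup.closure_closure_coe_preimage
  convert hgen using 2
  ext f
  simp [leftMult, rightMult, Subtype.ext_iff, eq_comm, exists_or]

theorem kepka_niemenmaa_necessity {K : Type*} [Group K]
    (φ : K ≃* MultL L) :
    ∃ (S : Subgroup K) (A B : Set K),
      S.normalCore = ⊥ ∧
      IsLeftTransversalTo A S ∧ IsLeftTransversalTo B S ∧
      (∀ a ∈ A, ∀ b ∈ B, a⁻¹ * b⁻¹ * a * b ∈ S) ∧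
      Subgroup.closure (A ∪ B) = ⊤ := by
  refine ⟨(stabilizer (MultL L) (1 : L)).comap (φ : K →* MultL L),
    φ ⁻¹' Set.range leftMult, φ ⁻¹' Set.range rightMult, ?_, ?_, ?_, ?_, ?_⟩
  · rw [Subgroup.normalCore_comap_of_surjective φ.surjective, normalCore_stabilizer_eq_bot,
      MonoidHom.comap_bot, MonoidHom.ker_eq_bot_iff]
    exact φ.injective
  · exact (isLeftTransversalTo_range_stabilizer leftMult_smul_one).preimage_mulEquiv φ
  · exact (isLeftTransversalTo_range_stabilizer rightMult_smul_one).preimage_mulEquiv φ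
  · rintro a ⟨u, hu⟩ b ⟨v, hv⟩
    simpa only [Subgroup.mem_comap, MonoidHom.coe_coe, map_mul, map_inv, ← hu, ← hv] using
      commutator_leftMult_rightMult_mem_stabilizer u v
  · rw [← Set.preimage_union, Subgroup.closure_preimage_mulEquiv,
      closure_range_leftMult_union_range_rightMult, Subgroup.comap_top]
end

section
/- Let L be a loop with identity e and 𝒩 a normal subgroup of Mult(L). Then 𝒩 is contained in M(𝒩(e)) = { m ∈ Mult(L) : x·𝒩(e) = m(x)·𝒩(e) for all x ∈ L }. -/
open Pointwise

variable {L : Type*} [LoopStr L]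

/-- A subloop of `L`: a subset containing the identity and closed under
multiplication and both divisions. -/
structure IsSubloop (N : Set L) : Prop where
  one_mem : (1 : L) ∈ N
  mul_mem : ∀ a ∈ N, ∀ b ∈ N, a * b ∈ N
  ldiv_mem : ∀ a ∈ N, ∀ b ∈ N, ldivL a b ∈ N
  rdiv_mem : ∀ a ∈ N, ∀ b ∈ N, rdivL b a ∈ N

/-- A normal subloop: `xN = Nx`, `(xN)y = x(Ny)` and `x(yN) = (xy)N` for all `x, y`. -/
def IsNormalSubloop (N : Set L) : Prop :=
  IsSubloop N ∧ ∀ x y : L,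
    ({x} : Set L) * N = N * {x} ∧
    (({x} : Set L) * N) * {y} = ({x} : Set L) * (N * {y}) ∧
    ({x} : Set L) * (({y} : Set L) * N) = (({x} : Set L) * {y}) * N

/-- `M(N) = { m ∈ Mult(L) : xN = m(x)N for all x }`. -/
noncomputable def MClass (N : Set L) : Set (Equiv.Perm L) :=
  {m | m ∈ MultL L ∧ ∀ x : L, ({x} : Set L) * N = ({m x} : Set L) * N}

/-! Since `N` is normal in `Mult(L)`, the left translation `λ_x` maps the `N`-orbit of `1` onto
the `N`-orbit of `λ_x 1 = x`; hence `x · 𝒩(e)` is the `N`-orbit of `x`, which does not change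
when `x` is moved by an element of `N`. -/

open MulAction

lemma leftT_mem_MultL (a : L) : leftT a ∈ MultL L :=
  Subgroup.subset_closure ⟨a, Or.inl rfl⟩

lemma singleton_mul_eq_leftT_smul (a : L) (S : Set L) : ({a} : Set L) * S = leftT a • S := by
  rw [Set.singleton_mul]
  rfl

lemma setOf_apply_mem_eq_orbit (N : Subgroup (MultL L)) (x : L) :
    {l : L | ∃ m : MultL L, m ∈ N ∧ (m : Equiv.Perm L) x = l} = orbit N x := by
  ext l
  simp [orbit]

lemma singleton_mul_orbit_one (N : Subgroup (MultL L)) [N.Normal] (x : L) :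
    ({x} : Set L) * orbit N 1 = orbit N x :=
  calc ({x} : Set L) * orbit N 1 = (⟨leftT x, leftT_mem_MultL x⟩ : MultL L) • orbit N 1 :=
        singleton_mul_eq_leftT_smul x _
    _ = orbit N (x * 1) := smul_orbit_eq_orbit_smul N 1 _
    _ = orbit N x := by rw [LoopStr.mul_one]

theorem normal_subgroup_le_MClass (N : Subgroup (MultL L)) [N.Normal] :
    ∀ n : MultL L, n ∈ N →
      (n : Equiv.Perm L) ∈ MClass {l : L | ∃ m : MultL L, m ∈ N ∧ (m : Equiv.Perm L) 1 = l} := by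
  intro n hn
  refine ⟨n.2, fun x => ?_⟩
  rw [setOf_apply_mem_eq_orbit, singleton_mul_orbit_one, singleton_mul_orbit_one]
  exact (orbit_smul (⟨n, hn⟩ : N) x).symm
end

section
/- If the multiplication group Mult(L) of a loop L is a nilpotent group of class n, then L is centrally nilpotent of class at most n. -/
open Pointwise

variable {L : Type*} [LoopStr L]

/-- `z` is central modulo the normal subloop `N` (i.e. its class is central in `L/N`). -/
def CentralMod (N : Set L) (z : L) : Prop :=
  ∀ x y : L,
    ({z * x * y} : Set L) * N = ({z * (x * y)} : Set L) * N ∧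
    ({x * (y * z)} : Set L) * N = ({x * y * z} : Set L) * N ∧
    ({x * z * y} : Set L) * N = ({x * (z * y)} : Set L) * N ∧
    ({z * x} : Set L) * N = ({x * z} : Set L) * N

/-- `L` is centrally nilpotent of class at most `n`: there is an ascending central
series of normal subloops from `{1}` to `L` of length `n`. -/
def CentrallyNilpotentOfClassLe (L : Type*) [LoopStr L] (n : ℕ) : Prop :=
  ∃ c : ℕ → Set L, c 0 = {1} ∧ (∀ i, c i ⊆ c (i + 1)) ∧
    (∀ i, IsNormalSubloop (c i)) ∧
    (∀ i, ∀ z ∈ c (i + 1), CentralMod (c i) z) ∧ c n = Set.univ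

/-! The `i`-th term of the central series is the orbit `1^{Z_i}` of the identity under the `i`-th
term `Z_i` of the upper central series of `Mult(L)`. Translations permute the orbits of a normal
subgroup `N ⊴ Mult(L)`, which makes `1^N` a normal subloop whose cosets are the `N`-orbits. If
`g ∈ Z_{i+1}` then `t g ≡ g t` modulo `Z_i` for every `t ∈ Mult(L)`, so `t (g 1)` and `g (t 1)`
lie in one `Z_i`-orbit; choosing for `t` the products of translations that agree at `1` exactly
when the loop axioms say so shows that `g 1` is central modulo `1^{Z_i}`. -/

namespace MulAction

variable {G X : Type*} [Group G] [MulAction G X] (N : Subgroup G)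

theorem mem_orbit_iff_smul_mem_orbit_smul [N.Normal] (g : G) {x y : X} :
    y ∈ orbit N x ↔ g • y ∈ orbit N (g • x) := by
  rw [← smul_orbit_eq_orbit_smul, Set.smul_mem_smul_set_iff]

theorem orbit_smul_smul_comm {g : G} (hg : ∀ t : G, g * t * g⁻¹ * t⁻¹ ∈ N) (t : G) (x : X) :
    orbit N (t • g • x) = orbit N (g • t • x) := by
  have hc : t • g • x = (⟨_, N.inv_mem (hg t)⟩ : N) • g • t • x := by
    rw [Subgroup.mk_smul, smul_smul, smul_smul, smul_smul]
    group
  rw [hc, orbit_smul]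

theorem orbit_mono {N₁ N₂ : Subgroup G} (h : N₁ ≤ N₂) (x : X) : orbit N₁ x ⊆ orbit N₂ x := by
  rintro _ ⟨g, rfl⟩
  exact ⟨⟨g, h g.2⟩, rfl⟩

theorem orbit_bot (x : X) : orbit (⊥ : Subgroup G) x = {x} := by
  ext y
  simp [mem_orbit_iff, eq_comm]

end MulAction

open MulAction

namespace LoopStr

variable {L : Type*} [LoopStr L]

noncomputable def leftMul (a : L) : MultL L :=
  ⟨leftT a, Subgroup.subset_closure ⟨a, .inl rfl⟩⟩

noncomputable def rightMul (a : L) : MultL L :=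
  ⟨rightT a, Subgroup.subset_closure ⟨a, .inr rfl⟩⟩

@[simp] theorem leftMul_smul (a y : L) : leftMul a • y = a * y := rfl

@[simp] theorem rightMul_smul (a y : L) : rightMul a • y = y * a := rfl

theorem singleton_mul_eq_leftMul_smul (a : L) (s : Set L) : {a} * s = leftMul a • s := by
  rw [Set.singleton_mul]; rfl

theorem mul_singleton_eq_rightMul_smul (a : L) (s : Set L) : s * {a} = rightMul a • s := by
  rw [Set.mul_singleton]; rfl

variable (N : Subgroup (MultL L)) [N.Normal]

theorem singleton_mul_orbit (a x : L) : {a} * orbit N x = orbit N (a * x) := by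
  rw [singleton_mul_eq_leftMul_smul, smul_orbit_eq_orbit_smul, leftMul_smul]

theorem orbit_mul_singleton (a x : L) : orbit N x * {a} = orbit N (x * a) := by
  rw [mul_singleton_eq_rightMul_smul, smul_orbit_eq_orbit_smul, rightMul_smul]

theorem isSubloop_orbit_one : IsSubloop (orbit N (1 : L)) where
  one_mem := mem_orbit_self 1
  mul_mem a ha b hb := by
    rwa [mem_orbit_iff_smul_mem_orbit_smul N (leftMul a), leftMul_smul, leftMul_smul, mul_one,
      orbit_eq_iff.mpr ha] at hb
  ldiv_mem a ha b hb := by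
    rwa [mem_orbit_iff_smul_mem_orbit_smul N (leftMul a), leftMul_smul, leftMul_smul, mul_one,
      orbit_eq_iff.mpr ha, ldivL, (existsUnique_ldiv a b).choose_spec.1]
  rdiv_mem a ha b hb := by
    rwa [mem_orbit_iff_smul_mem_orbit_smul N (rightMul a), rightMul_smul, rightMul_smul, one_mul,
      orbit_eq_iff.mpr ha, rdivL, (existsUnique_rdiv a b).choose_spec.1]

theorem isNormalSubloop_orbit_one : IsNormalSubloop (orbit N (1 : L)) :=
  ⟨isSubloop_orbit_one N, fun x y => by
    simp only [Set.singleton_mul_singleton, singleton_mul_orbit, orbit_mul_singleton, mul_one,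
      one_mul, and_self]⟩

theorem centralMod_orbit_one {g : MultL L} (hg : ∀ t, g * t * g⁻¹ * t⁻¹ ∈ N) :
    CentralMod (orbit N (1 : L)) (g • 1) := by
  have key : ∀ t t' : MultL L, t • (1 : L) = t' • 1 →
      orbit N (t • g • (1 : L)) = orbit N (t' • g • 1) := fun t t' h => by
    rw [orbit_smul_smul_comm N hg, orbit_smul_smul_comm N hg, h]
  intro x y
  simp only [singleton_mul_orbit, mul_one]
  refine ⟨?_, ?_, ?_, ?_⟩
  · exact key (rightMul y * rightMul x) (rightMul (x * y)) (by simp [mul_smul, one_mul])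
  · exact key (leftMul x * leftMul y) (leftMul (x * y)) (by simp [mul_smul, mul_one])
  · exact key (rightMul y * leftMul x) (leftMul x * rightMul y)
      (by simp [mul_smul, one_mul, mul_one])
  · exact key (rightMul x) (leftMul x) (by simp [one_mul, mul_one])

end LoopStr

open LoopStr in
theorem nilpotent_mult_implies_centrally_nilpotent (n : ℕ)
    [Group.IsNilpotent (MultL L)] (h : Group.nilpotencyClass (MultL L) = n) :
    CentrallyNilpotentOfClassLe L n := by
  refine ⟨fun i => orbit (Subgroup.upperCentralSeries (MultL L) i) (1 : L), orbit_bot 1,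
    fun i => orbit_mono (Subgroup.upperCentralSeries_mono _ i.le_succ) 1,
    fun i => isNormalSubloop_orbit_one _, ?_, ?_⟩
  · rintro i _ ⟨g, rfl⟩
    exact centralMod_orbit_one _ (Subgroup.mem_upperCentralSeries_succ_iff.mp g.2)
  · dsimp only
    rw [← h, Subgroup.upperCentralSeries_nilpotencyClass]
    exact Set.eq_univ_of_forall fun b => ⟨⟨leftMul b, trivial⟩, mul_one b⟩
end

section
/- Let L be a loop. If its inner mapping group Inn(L) is trivial, then L is an abelian group. -/
open Pointwise

variable {L : Type*} [LoopStr L]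

theorem trivial_inn_implies_abelian_group
    (h : ∀ g ∈ MultL L, (g : Equiv.Perm L) 1 = 1 → g = 1) :
    (∀ x y z : L, x * y * z = x * (y * z)) ∧ (∀ x y : L, x * y = y * x) := by
  have hl : ∀ a : L, leftT a ∈ MultL L := fun a => Subgroup.subset_closure ⟨a, Or.inl rfl⟩
  have hr : ∀ a : L, rightT a ∈ MultL L := fun a => Subgroup.subset_closure ⟨a, Or.inr rfl⟩
  have hassoc : ∀ x y : L, leftT x * leftT y = leftT (x * y) := by
    intro x y
    have hmem : (leftT (x * y))⁻¹ * (leftT x * leftT y) ∈ MultL L :=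
      mul_mem (inv_mem (hl _)) (mul_mem (hl x) (hl y))
    have hfix : ((leftT (x * y))⁻¹ * (leftT x * leftT y)) 1 = 1 := by
      show (leftT (x * y))⁻¹ (leftT x (leftT y 1)) = 1
      have : leftT x (leftT y 1) = leftT (x * y) 1 := by
        show x * (y * 1) = (x * y) * 1
        rw [LoopStr.mul_one, LoopStr.mul_one]
      rw [this]
      exact Equiv.symm_apply_apply _ _
    have := h _ hmem hfix
    rwa [inv_mul_eq_one, eq_comm] at this
  have hcomm : ∀ x : L, leftT x = rightT x := by
    intro x
    have hmem : (rightT x)⁻¹ * leftT x ∈ MultL L := mul_mem (inv_mem (hr x)) (hl x)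
    have hfix : ((rightT x)⁻¹ * leftT x) 1 = 1 := by
      show (rightT x)⁻¹ (leftT x 1) = 1
      have : leftT x 1 = rightT x 1 := by
        show x * 1 = 1 * x
        rw [LoopStr.mul_one, LoopStr.one_mul]
      rw [this]
      exact Equiv.symm_apply_apply _ _
    have := h _ hmem hfix
    rwa [inv_mul_eq_one, eq_comm] at this
  constructor
  · intro x y z
    have := congrArg (fun f : Equiv.Perm L => f z) (hassoc x y)
    exact this.symm
  · intro x y
    exact congrArg (fun f : Equiv.Perm L => f y) (hcomm x)
end
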